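/- arXiv:1906.09804 — 5 statements merged into one kernel-verified Lean document; each statement's English description precedes it below -/
import Mathlib

section
/- If f : [0,1] → ℝ is continuous, D⁺f(x) ≥ 0 for Lebesgue-almost every x, and D⁺f(x) > −∞ for every x ∈ [0,1), then f is non-decreasing. -/
/-!
The points where `D⁺f < 0` form a null set `E`. Cover `E` by open sets `V k` with
`|V k| < ε / 2 ^ (k + 1)`; then `g x = ∑ k, |V k ∩ (-∞, x]|` is continuous, non-decreasing,
bounded by `ε`, and its right slopes tend to `+∞` at every point of `E`. Since `D⁺f > -∞`
everywhere, `D⁺(f + g) ≥ 0` at every point of `[0, 1)`, so `f + g` is non-decreasing by the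
fencing theorem, and letting `ε → 0` gives the claim.
-/

open MeasureTheory Filter Set

/-- Upper right Dini derivative of `f` at `t` (restricted to the domain `[0,1]`). -/
noncomputable def DR (f : ℝ → ℝ) (t : ℝ) : EReal :=
  Filter.limsup (fun x => (((f x - f t) / (x - t) : ℝ) : EReal)) (nhdsWithin t (Set.Ioc t 1))

/-- Lower right Dini derivative. -/
noncomputable def Dr (f : ℝ → ℝ) (t : ℝ) : EReal :=
  Filter.liminf (fun x => (((f x - f t) / (x - t) : ℝ) : EReal)) (nhdsWithin t (Set.Ioc t 1))

/-- Upper left Dini derivative. -/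
noncomputable def DL (f : ℝ → ℝ) (t : ℝ) : EReal :=
  Filter.limsup (fun x => (((f x - f t) / (x - t) : ℝ) : EReal)) (nhdsWithin t (Set.Ico 0 t))

/-- Lower left Dini derivative. -/
noncomputable def Dl (f : ℝ → ℝ) (t : ℝ) : EReal :=
  Filter.liminf (fun x => (((f x - f t) / (x - t) : ℝ) : EReal)) (nhdsWithin t (Set.Ico 0 t))

open Topology

section DistributionOfSet

variable {V : Set ℝ} {x z : ℝ}

theorem volume_real_inter_Iic_add_inter_Ioc (hV : MeasurableSet V) (hV' : volume V ≠ ⊤)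
    (hxz : x ≤ z) :
    volume.real (V ∩ Iic x) + volume.real (V ∩ Ioc x z) = volume.real (V ∩ Iic z) := by
  rw [← measureReal_union ((Iic_disjoint_Ioc le_rfl).mono inter_subset_right inter_subset_right)
    (hV.inter measurableSet_Ioc) (measure_ne_top_of_subset inter_subset_left hV')
    (measure_ne_top_of_subset inter_subset_left hV'), ← inter_union_distrib_left,
    Iic_union_Ioc_eq_Iic hxz]

theorem monotone_volume_real_inter_Iic (hV : volume V ≠ ⊤) :
    Monotone fun x => volume.real (V ∩ Iic x) := fun _ _ hxz =>
  measureReal_mono (inter_subset_inter_right _ (Iic_subset_Iic.2 hxz))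
    (measure_ne_top_of_subset inter_subset_left hV)

theorem lipschitzWith_volume_real_inter_Iic (hV : MeasurableSet V) (hV' : volume V ≠ ⊤) :
    LipschitzWith 1 fun x => volume.real (V ∩ Iic x) := by
  refine LipschitzWith.of_le_add fun x y => ?_
  rcases le_total x y with hxy | hyx
  · linarith [monotone_volume_real_inter_Iic hV' hxy, dist_nonneg (x := x) (y := y)]
  · rw [← volume_real_inter_Iic_add_inter_Ioc hV hV' hyx, Real.dist_eq,
      abs_of_nonneg (sub_nonneg.2 hyx)]
    gcongr
    calc volume.real (V ∩ Ioc y x) ≤ volume.real (Ioc y x) :=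
          measureReal_mono inter_subset_right measure_Ioc_lt_top.ne
      _ = x - y := Real.volume_real_Ioc_of_le hyx

theorem IsOpen.eventually_volume_real_inter_Iic_add_sub_eq (hV : IsOpen V)
    (hV' : volume V ≠ ⊤) (hx : x ∈ V) :
    ∀ᶠ z in 𝓝[>] x, volume.real (V ∩ Iic x) + (z - x) = volume.real (V ∩ Iic z) := by
  obtain ⟨u, hxu, hsub⟩ := exists_Ico_subset_of_mem_nhds (hV.mem_nhds hx) ⟨x + 1, by simp⟩
  filter_upwards [Ioo_mem_nhdsGT hxu] with z hz
  rw [← volume_real_inter_Iic_add_inter_Ioc hV.measurableSet hV' hz.1.le,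
    inter_eq_right.2 (show Ioc x z ⊆ V from fun y hy => hsub ⟨hy.1.le, hy.2.trans_lt hz.2⟩),
    Real.volume_real_Ioc_of_le hz.1.le]

end DistributionOfSet

theorem tendsto_slope_tsum_atTop {φ : ℕ → ℝ → ℝ} (hmono : ∀ k, Monotone (φ k))
    (hsum : ∀ x, Summable (φ · x)) {x : ℝ}
    (hsteep : ∀ k, ∀ᶠ z in 𝓝[>] x, φ k x + (z - x) ≤ φ k z) :
    Tendsto (slope (fun y => ∑' k, φ k y) x) (𝓝[>] x) atTop := by
  refine tendsto_atTop.2 fun M => ?_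
  obtain ⟨n, hn⟩ := exists_nat_ge M
  filter_upwards [(Finset.range n).eventually_all.2 fun k _ => hsteep k, self_mem_nhdsWithin]
    with z hz hxz
  have hxz' : 0 < z - x := sub_pos.2 hxz
  calc M ≤ n := hn
    _ = (∑ _ ∈ Finset.range n, (z - x)) / (z - x) := by
      rw [Finset.sum_const, Finset.card_range, nsmul_eq_mul, mul_div_cancel_right₀ _ hxz'.ne']
    _ ≤ (∑ k ∈ Finset.range n, (φ k z - φ k x)) / (z - x) := by
      gcongr ?_ / _
      exact Finset.sum_le_sum fun k hk => by linarith [hz k hk]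
    _ ≤ (∑' k, (φ k z - φ k x)) / (z - x) := by
      gcongr
      exact ((hsum z).sub (hsum x)).sum_le_tsum _ fun k _ => sub_nonneg.2 (hmono k hxz.le)
    _ = slope (fun y => ∑' k, φ k y) x z := by
      rw [slope_def_field, (hsum z).tsum_sub (hsum x)]

theorem exists_continuous_monotone_tendsto_slope_atTop {E : Set ℝ} (hE : volume E = 0) {ε : ℝ}
    (hε : 0 < ε) : ∃ g : ℝ → ℝ, Continuous g ∧ Monotone g ∧ (∀ x, 0 ≤ g x ∧ g x ≤ ε) ∧
      ∀ x ∈ E, Tendsto (slope g x) (𝓝[>] x) atTop := by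
  set u : ℕ → ℝ := fun k => ε / 2 / 2 ^ k
  choose V hEV hV_open hV_vol using fun k =>
    E.exists_isOpen_lt_of_lt (ENNReal.ofReal (u k)) (hE ▸ ENNReal.ofReal_pos.2 (by positivity))
  have hV_fin k : volume (V k) ≠ ⊤ := (hV_vol k).ne_top
  set φ : ℕ → ℝ → ℝ := fun k x => volume.real (V k ∩ Iic x)
  have hφ_mono k : Monotone (φ k) := monotone_volume_real_inter_Iic (hV_fin k)
  have hφ_nonneg k x : 0 ≤ φ k x := measureReal_nonneg
  have hφ_le k x : φ k x ≤ u k :=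
    (measureReal_mono inter_subset_left (hV_fin k)).trans
      (ENNReal.toReal_le_of_le_ofReal (by positivity) (hV_vol k).le)
  have hu : Summable u := summable_geometric_two' ε
  have hφ_sum x : Summable (φ · x) := .of_nonneg_of_le (hφ_nonneg · x) (hφ_le · x) hu
  refine ⟨fun x => ∑' k, φ k x, ?_, fun x y hxy => ?_, fun x => ⟨?_, ?_⟩, fun x hx => ?_⟩
  · refine continuous_tsum (fun k => ?_) hu fun k x => ?_
    · exact (lipschitzWith_volume_real_inter_Iic (hV_open k).measurableSet (hV_fin k)).continuous
    · rw [Real.norm_of_nonneg (hφ_nonneg k x)]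
      exact hφ_le k x
  · exact (hφ_sum x).tsum_le_tsum (fun k => hφ_mono k hxy) (hφ_sum y)
  · exact tsum_nonneg (hφ_nonneg · x)
  · exact ((hφ_sum x).tsum_le_tsum (hφ_le · x) hu).trans (tsum_geometric_two' ε).le
  · refine tendsto_slope_tsum_atTop hφ_mono hφ_sum fun k => ?_
    filter_upwards [(hV_open k).eventually_volume_real_inter_Iic_add_sub_eq (hV_fin k) (hEV k hx)]
      with z hz
    exact hz.le

theorem frequently_lt_slope_of_coe_lt_DR {f : ℝ → ℝ} {x c : ℝ} (hx : x < 1)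
    (h : (c : EReal) < DR f x) : ∃ᶠ z in 𝓝[>] x, c < slope f x z := by
  rw [DR, nhdsWithin_Ioc_eq_nhdsGT hx] at h
  refine (frequently_lt_of_lt_limsup (by isBoundedDefault) h).mono fun z hz => ?_
  rw [slope_def_field]
  exact_mod_cast hz

theorem Filter.Frequently.lt_slope_add {f g : ℝ → ℝ} {x c d : ℝ} {l : Filter ℝ}
    (hf : ∃ᶠ z in l, c < slope f x z) (hg : ∀ᶠ z in l, d ≤ slope g x z) :
    ∃ᶠ z in l, c + d < slope (f + g) x z :=
  (hf.and_eventually hg).mono fun z ⟨hfz, hgz⟩ => by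
    rw [slope_def_module, Pi.add_apply, Pi.add_apply, add_sub_add_comm, smul_add,
      ← slope_def_module, ← slope_def_module]
    linarith

theorem monotoneOn_of_frequently_lt_slope {h : ℝ → ℝ} {a b : ℝ} (hc : ContinuousOn h (Icc a b))
    (hs : ∀ x ∈ Ico a b, ∀ r < 0, ∃ᶠ z in 𝓝[>] x, r < slope h x z) : MonotoneOn h (Icc a b) := by
  intro x hx y hy hxy
  have hs' : ∀ z ∈ Ico x y, ∀ r, 0 < r → ∃ᶠ w in 𝓝[>] z, slope (fun t => -h t) z w < r :=
    fun z hz r hr => (hs z (Ico_subset_Ico hx.1 hy.2 hz) (-r) (neg_lt_zero.2 hr)).mono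
      fun w hw => by rw [slope_neg]; linarith
  have := image_le_of_liminf_slope_right_le_deriv_boundary (B := fun _ => -h x) (B' := 0)
    (hc.mono (Icc_subset_Icc hx.1 hy.2)).neg le_rfl continuousOn_const
    (fun _ _ => hasDerivWithinAt_const _ _ _) hs' (right_mem_Icc.2 hxy)
  simpa using this

/-- If `f` is continuous on `[0,1]`, `D⁺f(x) ≥ 0` for a.e. `x`, and `D⁺f(x) > -∞` for every
`x ∈ [0,1)`, then `f` is non-decreasing on `[0,1]`. -/
theorem stmt3 (f : ℝ → ℝ) (hc : ContinuousOn f (Set.Icc 0 1))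
    (h1 : ∀ᵐ x ∂(volume.restrict (Set.Icc (0:ℝ) 1)), (0 : EReal) ≤ DR f x)
    (h2 : ∀ x ∈ Set.Ico (0:ℝ) 1, (⊥ : EReal) < DR f x) :
    MonotoneOn f (Set.Icc 0 1) := by
  have hE : volume ({x | ¬ (0 : EReal) ≤ DR f x} ∩ Icc 0 1) = 0 := by
    rwa [ae_iff, Measure.restrict_apply' measurableSet_Icc] at h1
  intro a ha b hb hab
  refine le_of_forall_pos_le_add fun ε hε => ?_
  obtain ⟨g, hg_cont, hg_mono, hg_bound, hg_slope⟩ :=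
    exists_continuous_monotone_tendsto_slope_atTop hE hε
  have hfg : MonotoneOn (f + g) (Icc 0 1) := by
    refine monotoneOn_of_frequently_lt_slope (hc.add hg_cont.continuousOn) fun x hx r hr => ?_
    by_cases h0 : (0 : EReal) ≤ DR f x
    · have hg : ∀ᶠ z in 𝓝[>] x, 0 ≤ slope g x z := eventually_nhdsWithin_of_forall fun z hz =>
        (slope_nonneg_iff_of_le (le_of_lt hz)).2 (hg_mono (le_of_lt hz))
      simpa using (frequently_lt_slope_of_coe_lt_DR hx.2
        ((EReal.coe_lt_coe_iff.2 hr).trans_le h0)).lt_slope_add hg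
    · obtain ⟨c, -, hc⟩ := EReal.exists_between_coe_real (h2 x hx)
      simpa using (frequently_lt_slope_of_coe_lt_DR hx.2 hc).lt_slope_add
        ((hg_slope x ⟨h0, Ico_subset_Icc_self hx⟩).eventually_ge_atTop (r - c))
  have hfg_ab : f a + g a ≤ f b + g b := hfg ha hb hab
  linarith [(hg_bound a).1, (hg_bound b).2]
end

section
/- If f : [0,1] → ℝ is continuous and has a knot point at almost every x ∈ [0,1] (i.e., D⁺f(x) = D⁻f(x) = +∞ and D₊f(x) = D₋f(x) = −∞ a.e.), then there exists a point x₀ ∈ [0,1) with D⁺f(x₀) = −∞. -/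
open MeasureTheory Filter Set

/-!
If `f` is monotone on `[0,1]`, its lower right Dini derivative is nonnegative, contradicting
`D₊f = -∞` almost everywhere. Otherwise pick `a < b` with `f b < f a`. The set `N` of points
where `D⁺f ≠ +∞` is null, so there is a continuous increasing `φ` whose right difference
quotients tend to `+∞` at every point of `N`: the distribution function of `∑ₖ λ|Gₖ` for open
`Gₖ ⊇ N` with `λ(Gₖ) < 2⁻ᵏ`. For small `δ > 0`, `F = f + δφ` still has `F b < F a`, and at the
last point `x₀ ∈ [a,b)` with `F x₀ ≥ F a` the function `F` drops to the right, so `D⁺f(x₀) ≤ 0`.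
Hence `x₀ ∈ N`, where `D⁺f(x₀) ≤ -δ D₊φ(x₀) = -∞`.
-/

open scoped Topology ENNReal

section NullSetDensity

variable {N : Set ℝ}

theorem exists_isFiniteMeasure_eventually_nat_mul_volume_le (hN : volume N = 0) :
    ∃ ν : Measure ℝ, IsFiniteMeasure ν ∧ NullSingletonClass ν ∧
      ∀ x ∈ N, ∀ K : ℕ, ∀ᶠ t in 𝓝[>] x, (K : ℝ≥0∞) * volume (Ioc x t) ≤ ν (Ioc x t) := by
  choose G hNG hGo hGvol using fun k : ℕ =>
    exists_isOpen_lt_of_lt N ((2⁻¹ : ℝ≥0∞) ^ k) (hN ▸ ENNReal.pow_pos (by norm_num) k)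
  refine ⟨Measure.sum fun k => volume.restrict (G k), ⟨?_⟩, ⟨fun x => ?_⟩, fun x hx K => ?_⟩
  · rw [Measure.sum_apply _ MeasurableSet.univ]
    calc ∑' k, volume.restrict (G k) univ ≤ ∑' k : ℕ, (2⁻¹ : ℝ≥0∞) ^ k :=
          ENNReal.tsum_le_tsum fun k => by simpa using (hGvol k).le
      _ < ⊤ := by rw [ENNReal.tsum_geometric]; norm_num
  · simp [Measure.sum_apply _ (measurableSet_singleton x)]
  · have hU : ⋂ k ∈ Finset.range K, G k ∈ 𝓝 x :=
      (isOpen_biInter_finset fun k _ => hGo k).mem_nhds (mem_iInter₂.2 fun k _ => hNG k hx)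
    obtain ⟨u, hxu, hu⟩ := exists_Ico_subset_of_mem_nhds hU (exists_gt x)
    filter_upwards [Ioo_mem_nhdsGT hxu] with t ht
    have hG : ∀ k ∈ Finset.range K, Ioc x t ∩ G k = Ioc x t := fun k hk =>
      inter_eq_left.2 fun s hs => mem_iInter₂.1 (hu ⟨hs.1.le, hs.2.trans_lt ht.2⟩) k hk
    calc (K : ℝ≥0∞) * volume (Ioc x t) = ∑ k ∈ Finset.range K, volume (Ioc x t ∩ G k) := by
          simp [Finset.sum_congr rfl fun k hk => congrArg volume (hG k hk)]
      _ ≤ ∑' k, volume (Ioc x t ∩ G k) := ENNReal.sum_le_tsum _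
      _ = _ := by
          simp [Measure.sum_apply _ measurableSet_Ioc, Measure.restrict_apply measurableSet_Ioc]

theorem exists_continuous_monotone_rightSlope_tendsto_top (hN : volume N = 0) :
    ∃ φ : ℝ → ℝ, Continuous φ ∧ Monotone φ ∧
      ∀ x ∈ N, ∀ c : ℝ, ∀ᶠ t in 𝓝[>] x, c * (t - x) ≤ φ t - φ x := by
  obtain ⟨ν, _, _, hν⟩ := exists_isFiniteMeasure_eventually_nat_mul_volume_le hN
  set φ : ℝ → ℝ := fun t => ∫ _ in 0..t, (1 : ℝ) ∂ν
  have hsub : ∀ x t, x ≤ t → φ t - φ x = ν.real (Ioc x t) := by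
    intro x t hxt
    rw [intervalIntegral.integral_interval_sub_left (by simp) (by simp),
      intervalIntegral.integral_const', Ioc_eq_empty (not_lt.2 hxt)]
    simp
  refine ⟨φ, intervalIntegral.continuous_primitive (fun _ _ => by simp) 0,
    fun x t hxt => sub_nonneg.1 (hsub x t hxt ▸ measureReal_nonneg), fun x hx c => ?_⟩
  obtain ⟨K, hK⟩ := exists_nat_ge c
  filter_upwards [hν x hx K, self_mem_nhdsWithin] with t hKν (hxt : x < t)
  rw [hsub x t hxt.le]
  calc c * (t - x) ≤ K * (t - x) := mul_le_mul_of_nonneg_right hK (sub_nonneg.2 hxt.le)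
    _ = ((K : ℝ≥0∞) * volume (Ioc x t)).toReal := by
        simp [Real.volume_Ioc, ENNReal.toReal_ofReal (sub_nonneg.2 hxt.le)]
    _ ≤ ν.real (Ioc x t) := ENNReal.toReal_mono (measure_ne_top _ _) hKν

end NullSetDensity

theorem exists_mem_Ico_forall_Ioc_lt {F : ℝ → ℝ} {a b : ℝ} (hF : ContinuousOn F (Icc a b))
    (hab : a ≤ b) (hFab : F b < F a) : ∃ x₀ ∈ Ico a b, ∀ t ∈ Ioc x₀ b, F t < F x₀ := by
  set S := Icc a b ∩ F ⁻¹' Ici (F a)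
  have hS : IsCompact S := isCompact_Icc.of_isClosed_subset
    (hF.preimage_isClosed_of_isClosed isClosed_Icc isClosed_Ici) inter_subset_left
  have hx₀ : sSup S ∈ S := hS.sSup_mem ⟨a, ⟨le_rfl, hab⟩, show F a ≤ F a from le_rfl⟩
  have hlast : ∀ t ∈ Ioc (sSup S) b, F t < F a := fun t ht => not_le.1 fun hFt =>
    not_lt.2 (le_csSup hS.bddAbove ⟨⟨hx₀.1.1.trans ht.1.le, ht.2⟩, hFt⟩) ht.1
  refine ⟨sSup S, ⟨hx₀.1.1, hx₀.1.2.lt_of_ne fun hb => not_le.2 hFab (hb ▸ hx₀.2)⟩,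
    fun t ht => (hlast t ht).trans_le hx₀.2⟩

section Dini

variable {f : ℝ → ℝ} {x : ℝ}

theorem DR_le_of_eventually_le {c : ℝ} (h : ∀ᶠ t in 𝓝[>] x, f t - f x ≤ c * (t - x)) :
    DR f x ≤ c := by
  refine limsup_le_of_le (by isBoundedDefault) ?_
  filter_upwards [h.filter_mono (nhdsWithin_mono x Ioc_subset_Ioi_self), self_mem_nhdsWithin]
    with t ht hxt
  exact EReal.coe_le_coe_iff.2 ((div_le_iff₀ (sub_pos.2 hxt.1)).2 ht)

theorem DR_eq_bot_of_forall_eventually_le (h : ∀ c : ℝ, ∀ᶠ t in 𝓝[>] x, f t - f x ≤ c * (t - x)) :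
    DR f x = ⊥ :=
  (EReal.eq_bot_iff_forall_lt _).2 fun c =>
    (DR_le_of_eventually_le (h (c - 1))).trans_lt (EReal.coe_lt_coe_iff.2 (sub_one_lt c))

theorem zero_le_Dr_of_monotoneOn (hf : MonotoneOn f (Icc 0 1)) (hx : x ∈ Icc 0 1) :
    0 ≤ Dr f x := by
  refine le_liminf_of_le (by isBoundedDefault) ?_
  filter_upwards [self_mem_nhdsWithin] with t ht
  have hft : f x ≤ f t := hf hx ⟨hx.1.trans ht.1.le, ht.2⟩ ht.1.le
  exact EReal.coe_nonneg.2 (div_nonneg (sub_nonneg.2 hft) (sub_nonneg.2 ht.1.le))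

end Dini

theorem exists_DR_eq_bot_of_lt {f φ : ℝ → ℝ} {a b : ℝ} (hf : ContinuousOn f (Icc a b))
    (hab : a ≤ b) (hfab : f b < f a) (hφc : Continuous φ) (hφm : Monotone φ)
    (hφ : ∀ x ∈ Ico a b, DR f x ≠ ⊤ → ∀ c : ℝ, ∀ᶠ t in 𝓝[>] x, c * (t - x) ≤ φ t - φ x) :
    ∃ x₀ ∈ Ico a b, DR f x₀ = ⊥ := by
  set δ := (f a - f b) / (φ b - φ a + 1)
  have hφab : 0 ≤ φ b - φ a := sub_nonneg.2 (hφm hab)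
  have hδ : 0 < δ := div_pos (by linarith) (by linarith)
  have hFab : f b + δ * φ b < f a + δ * φ a := by
    have : δ * (φ b - φ a + 1) = f a - f b := div_mul_cancel₀ _ (by linarith)
    nlinarith
  obtain ⟨x₀, hx₀, hdesc⟩ := exists_mem_Ico_forall_Ioc_lt (F := fun x => f x + δ * φ x)
    (hf.add (continuous_const.mul hφc).continuousOn) hab hFab
  have hslope : ∀ᶠ t in 𝓝[>] x₀, f t - f x₀ ≤ -δ * (φ t - φ x₀) := by
    filter_upwards [Ioc_mem_nhdsGT hx₀.2] with t ht
    linarith [hdesc t ht]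
  refine ⟨x₀, hx₀, ?_⟩
  by_cases htop : DR f x₀ = ⊤
  · have hle : DR f x₀ ≤ (0 : ℝ) := DR_le_of_eventually_le <| by
      filter_upwards [hslope, self_mem_nhdsWithin] with t ht hxt
      nlinarith [hφm hxt.le]
    simp [htop] at hle
  · refine DR_eq_bot_of_forall_eventually_le fun c => ?_
    filter_upwards [hslope, hφ x₀ hx₀ htop (-c / δ)] with t hft hφt
    calc f t - f x₀ ≤ -δ * (φ t - φ x₀) := hft
      _ ≤ -δ * (-c / δ * (t - x₀)) := mul_le_mul_of_nonpos_left hφt (by linarith)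
      _ = c * (t - x₀) := by field_simp

/-- If a continuous `f : [0,1] → ℝ` has a knot point at almost every point, then there is a
point `x₀ ∈ [0,1)` with `D⁺f(x₀) = -∞`. -/
theorem stmt5 (f : ℝ → ℝ) (hc : ContinuousOn f (Set.Icc 0 1))
    (hknot : ∀ᵐ x ∂(volume.restrict (Set.Icc (0:ℝ) 1)),
      DR f x = ⊤ ∧ DL f x = ⊤ ∧ Dr f x = ⊥ ∧ Dl f x = ⊥) :
    ∃ x₀ ∈ Set.Ico (0:ℝ) 1, DR f x₀ = ⊥ := by
  by_cases hmono : MonotoneOn f (Icc 0 1)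
  · have : (ae (volume.restrict (Icc (0 : ℝ) 1))).NeBot := ae_neBot.2 (by simp)
    obtain ⟨x, hx, -, -, hDr, -⟩ := ((ae_restrict_mem measurableSet_Icc).and hknot).exists
    simpa [hDr] using zero_le_Dr_of_monotoneOn hmono hx
  simp only [MonotoneOn, not_forall, not_le] at hmono
  obtain ⟨a, ha, b, hb, hab, hfab⟩ := hmono
  have hN : volume {x | ¬(x ∈ Icc (0 : ℝ) 1 → DR f x = ⊤)} = 0 :=
    ae_iff.1 ((ae_restrict_iff' measurableSet_Icc).1 (hknot.mono fun x hx => hx.1))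
  obtain ⟨φ, hφc, hφm, hφ⟩ := exists_continuous_monotone_rightSlope_tendsto_top hN
  obtain ⟨x₀, hx₀, hDR⟩ := exists_DR_eq_bot_of_lt (hc.mono (Icc_subset_Icc ha.1 hb.2)) hab hfab
    hφc hφm fun x hx hDR => hφ x fun h => hDR (h ⟨ha.1.trans hx.1, hx.2.le.trans hb.2⟩)
  exact ⟨x₀, ⟨ha.1.trans hx₀.1, hx₀.2.trans_le hb.2⟩, hDR⟩
end

section
/- A continuous function f : [0,1] → ℝ that has a knot point at Lebesgue-almost every point of [0,1] is not a Besicovitch function. -/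
open MeasureTheory Filter Set

open scoped Topology

/-!
If `f` is antitone on `[0,1]`, its upper right Dini derivative is `≤ 0` everywhere, so no point is
a knot point. Otherwise `f a < f z` for some `a ≤ z`. Let `F` be the running maximum of `f` from
`a`. The Stieltjes measure of `F` gives positive mass to `(a,1]` and is carried there by the
contact set `{f = F}`. Each contact point `x` is a maximum of `f` on `[a,x]`, so `D₋f(x) ≥ 0` and
`x` is not a knot point: the contact set is Lebesgue-null. A Stieltjes measure charging a
Lebesgue-null set forces an infinite derivative: the inverse of the homeomorphism `id + F` maps a
set of positive measure onto that null set, so by the change of variables formula its derivative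
vanishes somewhere. At the corresponding contact point `F`, hence also `f`, has left derivative
`+∞`, so `f` has a left derivative there.
-/

theorem OrderIso.tendsto_slope_atTop_of_hasDerivAt_symm (e : ℝ ≃o ℝ) {u : ℝ}
    (h : HasDerivAt e.symm 0 u) : Tendsto (slope e (e.symm u)) (𝓝[≠] (e.symm u)) atTop := by
  have hslope : Tendsto (slope e.symm u) (𝓝[≠] u) (𝓝[>] 0) :=
    tendsto_nhdsWithin_iff.2 ⟨hasDerivAt_iff_tendsto_slope.1 h,
      eventually_nhdsWithin_of_forall fun v hv =>
        (e.symm.strictMono.strictMonoOn univ).slope_pos (mem_univ u) (mem_univ v) (Ne.symm hv)⟩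
  have he : Tendsto e (𝓝[≠] (e.symm u)) (𝓝[≠] u) := by
    have := (e.toHomeomorph.map_punctured_nhds_eq (e.symm u)).le
    rwa [OrderIso.coe_toHomeomorph, e.apply_symm_apply] at this
  refine (tendsto_inv_nhdsGT_zero.comp (hslope.comp he)).congr fun y => ?_
  simp only [Function.comp_apply, slope_def_field, e.symm_apply_apply, e.apply_symm_apply, inv_div]

theorem StrictMono.exists_hasDerivAt_zero_of_volume_image_eq_zero {K : ℝ → ℝ} (hK : StrictMono K)
    {T : Set ℝ} (hT : MeasurableSet T) (hT0 : volume T ≠ 0) (himage : volume (K '' T) = 0) :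
    ∃ u ∈ T, HasDerivAt K 0 u := by
  set T' := T ∩ {u | DifferentiableAt ℝ K u}
  have hT' : MeasurableSet T' := hT.inter (measurableSet_of_differentiableAt ℝ K)
  have hT'0 : volume T' ≠ 0 := by
    rwa [measure_inter_conull hK.monotone.ae_differentiableAt]
  have hint : ∫⁻ u in T', ENNReal.ofReal |deriv K u| = 0 := by
    have := lintegral_image_eq_lintegral_abs_deriv_mul hT'
      (fun u hu => hu.2.hasDerivAt.hasDerivWithinAt) hK.injective.injOn (fun _ => 1)
    simp only [lintegral_const, Measure.restrict_apply_univ, one_mul, mul_one] at this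
    rw [← this]
    exact measure_mono_null (image_mono inter_subset_left) himage
  have hae := (lintegral_eq_zero_iff (measurable_deriv K).abs.ennreal_ofReal).1 hint
  have := ae_restrict_neBot.2 hT'0
  obtain ⟨u, hu0, huT, hud⟩ := (hae.and (ae_restrict_mem hT')).exists
  refine ⟨u, huT, ?_⟩
  simpa [abs_nonpos_iff.1 (ENNReal.ofReal_eq_zero.1 hu0)] using hud.hasDerivAt

theorem StieltjesFunction.volume_image_eq_measure (F : StieltjesFunction ℝ) (e : ℝ ≃o ℝ)
    (he : ⇑e = F) (s : Set ℝ) : volume (e '' s) = F.measure s := by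
  have hmap : volume.map e.symm = F.measure := by
    refine Measure.ext_of_Ioc' _ _ (fun p q _ => ?_) (fun p q _ => ?_)
    all_goals
      rw [Measure.map_apply e.symm.continuous.measurable measurableSet_Ioc, e.symm.preimage_Ioc,
        e.symm_symm, Real.volume_Ioc]
    · exact ENNReal.ofReal_ne_top
    · rw [F.measure_Ioc, he]
  rw [← hmap, e.image_eq_preimage_symm]
  exact (e.symm.toHomeomorph.measurableEmbedding.map_apply volume s).symm

theorem StieltjesFunction.exists_tendsto_slope_atTop (F : StieltjesFunction ℝ)
    (hF : Continuous F) {S : Set ℝ} (hS : MeasurableSet S) (hvol : volume S = 0)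
    (hpos : F.measure S ≠ 0) : ∃ x ∈ S, Tendsto (slope F x) (𝓝[≠] x) atTop := by
  set H := StieltjesFunction.id + F
  have hH : StrictMono H := fun x y hxy => add_lt_add_of_lt_of_le hxy (F.mono hxy.le)
  have hHsurj : Function.Surjective H := by
    refine (continuous_id.add hF).surjective ?_ ?_
    · refine tendsto_atTop_mono' _ ?_ (tendsto_atTop_add_const_right _ (F 0) tendsto_id)
      filter_upwards [eventually_ge_atTop 0] with x hx
      exact add_le_add_right (F.mono hx) x
    · refine tendsto_atBot_mono' _ ?_ (tendsto_atBot_add_const_right _ (F 0) tendsto_id)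
      filter_upwards [eventually_le_atBot 0] with x hx
      exact add_le_add_right (F.mono hx) x
  set e := hH.orderIsoOfSurjective H hHsurj
  have he : ⇑e = H := hH.coe_orderIsoOfSurjective H hHsurj
  have hT : volume (e '' S) ≠ 0 := by
    rwa [H.volume_image_eq_measure e he, StieltjesFunction.measure_add,
      ← Real.volume_eq_stieltjes_id, Measure.add_apply, hvol, zero_add]
  obtain ⟨u, ⟨x, hx, rfl⟩, hu⟩ := e.symm.strictMono.exists_hasDerivAt_zero_of_volume_image_eq_zero
    (e.image_eq_preimage_symm S ▸ hS.preimage e.symm.continuous.measurable) hT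
    (by rwa [e.symm_image_image])
  refine ⟨x, hx, ?_⟩
  have := e.tendsto_slope_atTop_of_hasDerivAt_symm hu
  rw [e.symm_apply_apply] at this
  refine (tendsto_atTop_add_const_right _ (-1) this).congr' ?_
  filter_upwards [self_mem_nhdsWithin] with y hy
  rw [he, slope_def_field, slope_def_field]
  simp only [H, StieltjesFunction.add_apply, StieltjesFunction.id_apply, id]
  field_simp [sub_ne_zero.2 hy]
  ring

noncomputable def runningMax (g : ℝ → ℝ) (a x : ℝ) : ℝ := sSup (g '' Icc a (max a x))

section RunningMax

variable {g : ℝ → ℝ} {a x y : ℝ}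

theorem runningMax_of_le (hx : a ≤ x) : runningMax g a x = sSup (g '' Icc a x) := by
  rw [runningMax, max_eq_right hx]

theorem runningMax_self : runningMax g a a = g a := by
  rw [runningMax_of_le le_rfl, Icc_self, image_singleton, csSup_singleton]

theorem le_runningMax (hg : Continuous g) (hy : y ∈ Icc a x) : g y ≤ runningMax g a x :=
  le_csSup (isCompact_Icc.bddAbove_image hg.continuousOn)
    ⟨y, ⟨hy.1, hy.2.trans (le_max_right a x)⟩, rfl⟩

theorem exists_mem_Icc_eq_runningMax (hg : Continuous g) (hx : a ≤ x) :
    ∃ t ∈ Icc a x, g t = runningMax g a x := by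
  rw [runningMax_of_le hx]
  exact (isCompact_Icc.image hg).sSup_mem ((nonempty_Icc.2 hx).image g)

theorem monotone_runningMax (hg : Continuous g) : Monotone (runningMax g a) := fun x _ hxy =>
  csSup_le_csSup (isCompact_Icc.bddAbove_image hg.continuousOn)
    ((nonempty_Icc.2 (le_max_left a x)).image g)
    (image_mono (Icc_subset_Icc_right (max_le_max le_rfl hxy)))

theorem continuous_runningMax (hg : Continuous g) : Continuous (runningMax g a) := by
  have hsup : Continuous fun x => sSup ((fun t => g (a + t * (max a x - a))) '' Icc 0 1) :=
    isCompact_Icc.continuous_sSup (by fun_prop)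
  refine hsup.congr fun x => ?_
  rw [runningMax, ← segment_eq_Icc (le_max_left a x), segment_eq_image', image_image]
  rfl

theorem exists_mem_Ioc_eq_runningMax_of_lt (hg : Continuous g) (hay : a ≤ y)
    (hlt : runningMax g a y < runningMax g a x) :
    ∃ t ∈ Ioc y x, g t = runningMax g a t := by
  have hyx : y ≤ x := (monotone_runningMax hg).reflect_lt hlt |>.le
  obtain ⟨t, ht, hgt⟩ := exists_mem_Icc_eq_runningMax hg (hay.trans hyx)
  have hyt : y < t := lt_of_not_ge fun hty => (le_runningMax hg ⟨ht.1, hty⟩).not_gt (hgt ▸ hlt)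
  refine ⟨t, ⟨hyt, ht.2⟩, le_antisymm (le_runningMax hg ⟨ht.1, le_rfl⟩) ?_⟩
  exact hgt ▸ monotone_runningMax hg ht.2

noncomputable def runningMaxStieltjes (hg : Continuous g) (a : ℝ) : StieltjesFunction ℝ where
  toFun := runningMax g a
  mono' := monotone_runningMax hg
  right_continuous' _ := (continuous_runningMax hg).continuousWithinAt

theorem coe_runningMaxStieltjes (hg : Continuous g) (a : ℝ) :
    ⇑(runningMaxStieltjes hg a) = runningMax g a :=
  rfl

theorem runningMaxStieltjes_measure_Ioi_diff_eq_zero (hg : Continuous g) :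
    (runningMaxStieltjes hg a).measure (Ioi a \ {x | g x = runningMax g a x}) = 0 := by
  have hopen : IsOpen (Ioi a \ {x | g x = runningMax g a x}) :=
    isOpen_Ioi.sdiff (isClosed_eq hg (continuous_runningMax hg))
  refine measure_null_of_locally_null _ fun x hx => ?_
  obtain ⟨y, z, -, hnhds, hsub⟩ := exists_Icc_mem_subset_of_mem_nhds (hopen.mem_nhds hx)
  refine ⟨Icc y z, mem_nhdsWithin_of_mem_nhds hnhds, ?_⟩
  have hyz : y ≤ z := nonempty_Icc.1 ⟨x, mem_of_mem_nhds hnhds⟩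
  have hconst : runningMax g a y = runningMax g a z := by
    refine (monotone_runningMax hg hyz).eq_of_not_lt fun hlt => ?_
    obtain ⟨t, ht, hgt⟩ := exists_mem_Ioc_eq_runningMax_of_lt hg (hsub ⟨le_rfl, hyz⟩).1.le hlt
    exact (hsub (Ioc_subset_Icc_self ht)).2 hgt
  rw [StieltjesFunction.measure_Icc, coe_runningMaxStieltjes,
    (continuous_runningMax hg).continuousWithinAt.leftLim_eq, hconst, sub_self,
    ENNReal.ofReal_zero]

theorem runningMaxStieltjes_measure_ne_zero (hg : Continuous g) {b z : ℝ} (hz : z ∈ Icc a b)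
    (hlt : g a < g z) :
    (runningMaxStieltjes hg a).measure ({x | g x = runningMax g a x} ∩ Ioc a b) ≠ 0 := by
  set ρ := (runningMaxStieltjes hg a).measure
  have hIoc : ρ (Ioc a b) ≠ 0 := by
    rw [StieltjesFunction.measure_Ioc, ENNReal.ofReal_ne_zero_iff, sub_pos]
    exact (runningMax_self (g := g)).trans_lt (hlt.trans_le (le_runningMax hg hz))
  have hdiff : ρ (Ioc a b \ {x | g x = runningMax g a x}) = 0 :=
    measure_mono_null (sdiff_subset_sdiff_left Ioc_subset_Ioi_self)
      (runningMaxStieltjes_measure_Ioi_diff_eq_zero hg)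
  have := measure_le_inter_add_sdiff ρ (Ioc a b) {x | g x = runningMax g a x}
  rw [hdiff, add_zero, inter_comm] at this
  exact fun h => hIoc (le_antisymm (this.trans h.le) zero_le)

end RunningMax

theorem Continuous.exists_tendsto_slope_nhdsLT_atTop {g : ℝ → ℝ} (hg : Continuous g)
    {a b z : ℝ} (hz : z ∈ Icc a b) (hlt : g a < g z)
    (hnull : volume {x ∈ Ioc a b | IsMaxOn g (Icc a x) x} = 0) :
    ∃ x ∈ Ioc a b, Tendsto (slope g x) (𝓝[<] x) atTop := by
  set C := {x | g x = runningMax g a x}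
  have hmeas : MeasurableSet (C ∩ Ioc a b) :=
    (isClosed_eq hg (continuous_runningMax hg)).measurableSet.inter measurableSet_Ioc
  have hvol : volume (C ∩ Ioc a b) = 0 := by
    refine measure_mono_null ?_ hnull
    rintro x ⟨hgx, hx⟩
    exact ⟨hx, isMaxOn_iff.2 fun y hy => hgx ▸ le_runningMax hg hy⟩
  obtain ⟨x, ⟨hgx : g x = runningMax g a x, hx⟩, htend⟩ :=
    (runningMaxStieltjes hg a).exists_tendsto_slope_atTop (continuous_runningMax hg) hmeas hvol
      (runningMaxStieltjes_measure_ne_zero hg hz hlt)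
  refine ⟨x, hx, tendsto_atTop_mono' _ ?_ (htend.mono_left (nhdsWithin_mono _ fun y hy =>
    ne_of_lt hy))⟩
  filter_upwards [Ioo_mem_nhdsLT hx.1] with y hy
  rw [slope_def_field, slope_def_field, coe_runningMaxStieltjes]
  refine div_le_div_of_nonpos_of_le (sub_nonpos.2 hy.2.le) ?_
  linarith [le_runningMax hg ⟨hy.1.le, le_rfl⟩ (g := g)]

theorem DR_le_zero_of_antitoneOn {f : ℝ → ℝ} (hf : AntitoneOn f (Icc 0 1)) {t : ℝ}
    (ht : t ∈ Icc 0 1) : DR f t ≤ 0 := by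
  refine limsup_le_of_le (by isBoundedDefault) ?_
  filter_upwards [self_mem_nhdsWithin] with x hx
  have hfx : f x ≤ f t := hf ht ⟨ht.1.trans hx.1.le, hx.2⟩ hx.1.le
  exact EReal.coe_nonpos.2 (div_nonpos_of_nonpos_of_nonneg (sub_nonpos.2 hfx) (sub_pos.2 hx.1).le)

theorem zero_le_Dl_of_eventually_le {f : ℝ → ℝ} {t : ℝ}
    (h : ∀ᶠ x in 𝓝[Ico 0 t] t, f x ≤ f t) : 0 ≤ Dl f t := by
  refine le_liminf_of_le (by isBoundedDefault) ?_
  filter_upwards [h, self_mem_nhdsWithin] with x hfx hx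
  exact EReal.coe_nonneg.2 (div_nonneg_of_nonpos (sub_nonpos.2 hfx) (sub_neg.2 hx.2).le)

theorem DL_eq_Dl_of_tendsto_slope_atTop {f : ℝ → ℝ} {t : ℝ} (ht : 0 < t)
    (h : Tendsto (slope f t) (𝓝[Ico 0 t] t) atTop) : DL f t = Dl f t := by
  have : (𝓝[Ico 0 t] t).NeBot := right_nhdsWithin_Ico_neBot ht
  have h' : Tendsto (fun x => (((f x - f t) / (x - t) : ℝ) : EReal)) (𝓝[Ico 0 t] t) (𝓝 ⊤) := by
    simpa only [slope_def_field] using EReal.tendsto_coe_nhds_top_iff.2 h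
  rw [DL, Dl, h'.limsup_eq, h'.liminf_eq]

theorem volume_setOf_isMaxOn_eq_zero_of_ae_Dl_eq_bot {f : ℝ → ℝ} {a : ℝ} (ha : 0 ≤ a)
    (hknot : ∀ᵐ x ∂(volume.restrict (Icc (0:ℝ) 1)), Dl f x = ⊥) :
    volume {x ∈ Ioc a 1 | IsMaxOn f (Icc a x) x} = 0 := by
  have hsub : {x ∈ Ioc a 1 | IsMaxOn f (Icc a x) x} ⊆ Icc 0 1 :=
    fun x hx => ⟨ha.trans hx.1.1.le, hx.1.2⟩
  rw [← Measure.restrict_eq_self volume hsub, measure_eq_zero_iff_ae_notMem]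
  filter_upwards [hknot] with x hx hmax
  refine EReal.bot_lt_zero.not_ge (hx ▸ zero_le_Dl_of_eventually_le ?_)
  filter_upwards [self_mem_nhdsWithin, mem_nhdsWithin_of_mem_nhds (Ioi_mem_nhds hmax.1.1)]
    with y hy hay
  exact isMaxOn_iff.1 hmax.2 y ⟨le_of_lt hay, hy.2.le⟩

theorem ContinuousOn.exists_tendsto_slope_nhdsWithin_Ico_atTop {f : ℝ → ℝ} {l r a z : ℝ}
    (hf : ContinuousOn f (Icc l r)) (hla : l ≤ a) (hz : z ∈ Icc a r) (hlt : f a < f z)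
    (hnull : volume {x ∈ Ioc a r | IsMaxOn f (Icc a x) x} = 0) :
    ∃ x ∈ Ioc a r, Tendsto (slope f x) (𝓝[Ico l x] x) atTop := by
  have hlr : l ≤ r := hla.trans (hz.1.trans hz.2)
  set g := fun x => f (projIcc l r hlr x)
  have hg : Continuous g :=
    hf.comp_continuous (continuous_subtype_val.comp continuous_projIcc) fun x => (projIcc l r _ x).2
  have hgf : EqOn g f (Icc l r) := fun x hx => by simp [g, projIcc_of_mem _ hx]
  have hnull' : volume {x ∈ Ioc a r | IsMaxOn g (Icc a x) x} = 0 := by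
    refine measure_mono_null ?_ hnull
    rintro x ⟨hx, hmax⟩
    refine ⟨hx, isMaxOn_iff.2 fun y hy => ?_⟩
    have := isMaxOn_iff.1 hmax y hy
    rwa [hgf ⟨hla.trans hy.1, hy.2.trans hx.2⟩, hgf ⟨hla.trans hx.1.le, hx.2⟩] at this
  obtain ⟨x, hx, htend⟩ := hg.exists_tendsto_slope_nhdsLT_atTop hz
    (by rwa [hgf ⟨hla, hz.1.trans hz.2⟩, hgf ⟨hla.trans hz.1, hz.2⟩]) hnull'
  refine ⟨x, hx, (htend.mono_left (nhdsWithin_mono _ Ico_subset_Iio_self)).congr' ?_⟩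
  filter_upwards [self_mem_nhdsWithin] with y hy
  simp only [slope_def_field, hgf ⟨hy.1, hy.2.le.trans hx.2⟩, hgf ⟨hla.trans hx.1.le, hx.2⟩]

/-- A continuous function with a knot point at almost every point of `[0,1]` is not a
Besicovitch function (a one-sided derivative, finite or infinite, exists somewhere). -/
theorem stmt6 (f : ℝ → ℝ) (hc : ContinuousOn f (Set.Icc 0 1))
    (hknot : ∀ᵐ x ∂(volume.restrict (Set.Icc (0:ℝ) 1)),
      DR f x = ⊤ ∧ DL f x = ⊤ ∧ Dr f x = ⊥ ∧ Dl f x = ⊥) :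
    ¬ ((∀ t ∈ Set.Ico (0:ℝ) 1, DR f t ≠ Dr f t) ∧
       (∀ t ∈ Set.Ioc (0:ℝ) 1, DL f t ≠ Dl f t)) := by
  rintro ⟨-, hleft⟩
  by_cases hanti : AntitoneOn f (Icc 0 1)
  · obtain ⟨t, ht, htop⟩ : ∃ t ∈ Ico (0:ℝ) 1, DR f t = ⊤ := by
      have := ae_restrict_neBot.2 (show volume (Ico (0:ℝ) 1) ≠ 0 by simp)
      obtain ⟨t, hknot_t, ht⟩ := ((ae_restrict_of_ae_restrict_of_subset Ico_subset_Icc_self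
        hknot).and (ae_restrict_mem measurableSet_Ico)).exists
      exact ⟨t, ht, hknot_t.1⟩
    simpa [htop] using DR_le_zero_of_antitoneOn hanti (Ico_subset_Icc_self ht)
  obtain ⟨a, ha, z, hz, haz, hfaz⟩ : ∃ a ∈ Icc (0:ℝ) 1, ∃ z ∈ Icc (0:ℝ) 1, a ≤ z ∧ f a < f z := by
    simpa only [AntitoneOn, not_forall, not_le, exists_prop] using hanti
  obtain ⟨x, hx, htend⟩ := hc.exists_tendsto_slope_nhdsWithin_Ico_atTop ha.1 ⟨haz, hz.2⟩ hfaz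
    (volume_setOf_isMaxOn_eq_zero_of_ae_Dl_eq_bot ha.1 (hknot.mono fun x hx => hx.2.2.2))
  have hx0 : 0 < x := ha.1.trans_lt hx.1
  exact hleft x ⟨hx0, hx.2⟩ (DL_eq_Dl_of_tendsto_slope_atTop hx0 htend)
end

section
/- If f : [0,1] → [0,1] is continuous and preserves Lebesgue measure, then it is impossible that f′₊(x) exists and equals 0 at every point x of a subinterval J ⊆ [0,1]. -/
open MeasureTheory Filter Set

/-- No continuous Lebesgue-measure-preserving map of `[0,1]` can have a right derivative
existing and equal to `0` at every point of a nondegenerate subinterval `J ⊆ [0,1]`. -/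
theorem stmt7 (f : ℝ → ℝ) (hmaps : Set.MapsTo f (Set.Icc 0 1) (Set.Icc 0 1))
    (hc : ContinuousOn f (Set.Icc 0 1))
    (hpres : ∀ A : Set ℝ, A ⊆ Set.Icc 0 1 → MeasurableSet A →
      volume (f ⁻¹' A ∩ Set.Icc 0 1) = volume A) :
    ¬ ∃ a b : ℝ, 0 ≤ a ∧ a < b ∧ b ≤ 1 ∧
      ∀ x ∈ Set.Ico a b, DR f x = 0 ∧ Dr f x = 0 := by
  rintro ⟨a, b, ha, hab, hb, hd⟩
  -- right derivative 0 at every point of [a,b)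
  have hderiv : ∀ x ∈ Set.Ico a b, HasDerivWithinAt f 0 (Set.Ici x) x := by
    intro x hx
    have hx1 : x < 1 := lt_of_lt_of_le hx.2 hb
    obtain ⟨hDR, hDr⟩ := hd x hx
    have htends : Tendsto (fun y => (((f y - f x) / (y - x) : ℝ) : EReal))
        (nhdsWithin x (Set.Ioc x 1)) (nhds (0 : EReal)) :=
      tendsto_of_liminf_eq_limsup hDr hDR
    have htendsR : Tendsto (fun y => (f y - f x) / (y - x))
        (nhdsWithin x (Set.Ioc x 1)) (nhds (0 : ℝ)) := by
      have h' : Tendsto (fun y => (((f y - f x) / (y - x) : ℝ) : EReal))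
          (nhdsWithin x (Set.Ioc x 1)) (nhds (((0:ℝ) : EReal))) := by
        simpa using htends
      exact EReal.tendsto_coe.mp h'
    have hEq : nhdsWithin x (Set.Ioc x 1) = nhdsWithin x (Set.Ioi x) :=
      nhdsWithin_Ioc_eq_nhdsGT hx1
    rw [hEq] at htendsR
    have hslope : Tendsto (slope f x) (nhdsWithin x (Set.Ici x \ {x})) (nhds (0 : ℝ)) := by
      have : Set.Ici x \ {x} = Set.Ioi x := Set.Ici_sdiff_left
      rw [this]
      refine htendsR.congr' ?_
      filter_upwards [self_mem_nhdsWithin] with y _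
      simp [slope_def_field]
    exact hasDerivWithinAt_iff_tendsto_slope.mpr hslope
  -- f is constant on [a,b]
  have habIcc : Set.Icc a b ⊆ Set.Icc 0 1 :=
    Set.Icc_subset_Icc ha hb
  have hconst : ∀ x ∈ Set.Icc a b, f x = f a :=
    constant_of_has_deriv_right_zero (hc.mono habIcc) hderiv
  -- contradiction with measure preservation
  have hA : {f a} ⊆ Set.Icc (0:ℝ) 1 := by
    intro y hy; rw [Set.mem_singleton_iff] at hy; subst hy
    exact hmaps (habIcc (Set.left_mem_Icc.mpr hab.le))
  have h0 : volume (f ⁻¹' {f a} ∩ Set.Icc 0 1) = 0 := by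
    rw [hpres {f a} hA (measurableSet_singleton _)]
    simp
  have hsub : Set.Icc a b ⊆ f ⁻¹' {f a} ∩ Set.Icc 0 1 := by
    intro x hx
    exact ⟨by simp [hconst x hx], habIcc hx⟩
  have := measure_mono (μ := volume) hsub
  rw [h0, Real.volume_Icc] at this
  simp only [nonpos_iff_eq_zero, ENNReal.ofReal_eq_zero] at this
  linarith [this]
end

section
/- The set of Besicovitch functions in C(λ) is meager (first category) in C(λ) with the uniform metric. -/
open MeasureTheory Filter

/-- The unit interval as a subtype of `ℝ`. -/
abbrev II : Set ℝ := Set.Icc 0 1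

/-- `C(λ)`: continuous Lebesgue-measure-preserving surjections of `[0,1]`, with the sup
metric inherited from `C([0,1],[0,1])`. -/
abbrev Clam : Type :=
  {f : C(II, II) // Function.Surjective f ∧
    ∀ A : Set II, MeasurableSet A → volume (f ⁻¹' A) = volume A}

/-- Upper right Dini derivative for maps of the unit interval. -/
noncomputable def DRs (f : II → II) (t : II) : EReal :=
  Filter.limsup (fun x => ((((f x : ℝ) - (f t : ℝ)) / ((x : ℝ) - (t : ℝ)) : ℝ) : EReal))
    (nhdsWithin t (Set.Ioi t))

/-- Lower right Dini derivative. -/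
noncomputable def Drs (f : II → II) (t : II) : EReal :=
  Filter.liminf (fun x => ((((f x : ℝ) - (f t : ℝ)) / ((x : ℝ) - (t : ℝ)) : ℝ) : EReal))
    (nhdsWithin t (Set.Ioi t))

/-- Upper left Dini derivative. -/
noncomputable def DLs (f : II → II) (t : II) : EReal :=
  Filter.limsup (fun x => ((((f x : ℝ) - (f t : ℝ)) / ((x : ℝ) - (t : ℝ)) : ℝ) : EReal))
    (nhdsWithin t (Set.Iio t))

/-- Lower left Dini derivative. -/
noncomputable def Dls (f : II → II) (t : II) : EReal :=
  Filter.liminf (fun x => ((((f x : ℝ) - (f t : ℝ)) / ((x : ℝ) - (t : ℝ)) : ℝ) : EReal))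
    (nhdsWithin t (Set.Iio t))

/-- A Besicovitch function: no one-sided derivative, finite or infinite, exists anywhere. -/
def Besicovitch (f : II → II) : Prop :=
  (∀ t : II, (t : ℝ) < 1 → DRs f t ≠ Drs f t) ∧ (∀ t : II, 0 < (t : ℝ) → DLs f t ≠ Dls f t)

open Set Topology unitInterval

/-!
Let `f ∈ C(λ)` have upper and lower right Dini derivatives `+∞` and `-∞` almost everywhere.
Replacing `f` by `1 - f` if necessary, some value `f x₀` lies below `f 1`. For `y ∈ (f x₀, f 1)` the last visit
`ψ y = max {x | f x ≤ y}` satisfies `f (ψ y) = y` and `f > y` on `(ψ y, 1]`, so the lower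
right Dini derivative of `f` at `ψ y` is nonnegative. Hence the monotone injective map `ψ`
sends an interval into a null set, and by the change of variables formula `ψ' = 0` at some
point `y`. There `0 < x - ψ y ≤ ψ (f x) - ψ y = o(f x - y)` as `x → ψ y⁺`, so `f` has right
derivative `+∞` at `ψ y`, and `f` is not a Besicovitch function.
-/

theorem exists_hasDerivAt_zero_of_volume_image_eq_zero {ψ : ℝ → ℝ} {s : Set ℝ}
    (hs : IsOpen s) (hne : s.Nonempty) (hmono : MonotoneOn ψ s) (hinj : InjOn ψ s)
    (hnull : volume (ψ '' s) = 0) : ∃ y ∈ s, HasDerivAt ψ 0 y := by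
  set t := s ∩ {y | DifferentiableAt ℝ ψ y}
  have ht : MeasurableSet t := hs.measurableSet.inter (measurableSet_of_differentiableAt ℝ ψ)
  have hst : volume s ≤ volume t := by
    refine measure_mono_ae ?_
    filter_upwards [hmono.ae_differentiableWithinAt_of_mem] with y hy hys
    exact ⟨hys, (hy hys).differentiableAt (hs.mem_nhds hys)⟩
  have hderiv : ∀ᵐ y ∂volume.restrict t, ENNReal.ofReal |deriv ψ y| = 0 := by
    have h := lintegral_image_eq_lintegral_abs_deriv_mul ht
      (fun y hy => hy.2.hasDerivAt.hasDerivWithinAt) (hinj.mono inter_subset_left) 1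
    simp only [Pi.one_apply, mul_one, lintegral_one, Measure.restrict_apply_univ] at h
    refine (lintegral_eq_zero_iff (measurable_deriv ψ).abs.ennreal_ofReal).1 ?_
    rw [← h]
    exact measure_mono_null (image_mono inter_subset_left) hnull
  have : (ae (volume.restrict t)).NeBot := by
    rw [ae_neBot, Ne, Measure.restrict_eq_zero]
    exact fun h => hs.measure_ne_zero volume hne (le_antisymm (hst.trans h.le) zero_le)
  obtain ⟨y, hy0, hyt⟩ := (hderiv.and (ae_restrict_mem ht)).exists
  have hy0' : deriv ψ y = 0 := by simpa using hy0
  exact ⟨y, hyt.1, hy0' ▸ hyt.2.hasDerivAt⟩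

theorem tendsto_slope_atTop_of_hasDerivWithinAt_zero {F ψ : ℝ → ℝ} {t : ℝ}
    (hψ : HasDerivWithinAt ψ 0 (Ioi (F t)) (F t)) (hψt : ψ (F t) = t)
    (hF : Tendsto F (𝓝[>] t) (𝓝[>] (F t))) (hle : ∀ᶠ x in 𝓝[>] t, x ≤ ψ (F x)) :
    Tendsto (slope F t) (𝓝[>] t) atTop := by
  have hslope : Tendsto (fun x => slope ψ (F t) (F x)) (𝓝[>] t) (𝓝 0) :=
    ((hasDerivWithinAt_iff_tendsto_slope' (lt_irrefl _)).1 hψ).comp hF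
  have hFt : ∀ᶠ x in 𝓝[>] t, F t < F x := hF.eventually self_mem_nhdsWithin
  have hbound : ∀ᶠ x in 𝓝[>] t,
      0 < (slope F t x)⁻¹ ∧ (slope F t x)⁻¹ ≤ slope ψ (F t) (F x) := by
    filter_upwards [self_mem_nhdsWithin, hFt, hle] with x (hx : t < x) hFx hxψ
    rw [slope_def_field, slope_def_field, inv_div, hψt]
    exact ⟨div_pos (sub_pos.2 hx) (sub_pos.2 hFx),
      div_le_div_of_nonneg_right (by linarith) (sub_pos.2 hFx).le⟩
  have hinv : Tendsto (slope F t)⁻¹ (𝓝[>] t) (𝓝[>] 0) :=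
    tendsto_nhdsWithin_iff.2
      ⟨tendsto_of_tendsto_of_tendsto_of_le_of_le' tendsto_const_nhds hslope
        (hbound.mono fun _ hx => hx.1.le) (hbound.mono fun _ hx => hx.2),
      hbound.mono fun _ hx => hx.1⟩
  simpa using hinv.inv_tendsto_nhdsGT_zero

def rightRecordPoints (F : ℝ → ℝ) (a b : ℝ) : Set ℝ :=
  {t | t ∈ Icc a b ∧ ∀ x ∈ Ioc t b, F t < F x}

theorem exists_tendsto_slope_atTop_of_volume_rightRecordPoints_eq_zero {F : ℝ → ℝ} {a b : ℝ}
    (hF : Continuous F) (hx₀ : ∃ x₀ ∈ Icc a b, F x₀ < F b)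
    (hnull : volume (rightRecordPoints F a b) = 0) :
    ∃ t ∈ Ico a b, Tendsto (slope F t) (𝓝[>] t) atTop := by
  obtain ⟨x₀, hx₀ab, hx₀b⟩ := hx₀
  set S : ℝ → Set ℝ := fun y => {x | x ∈ Icc a b ∧ F x ≤ y}
  set ψ : ℝ → ℝ := fun y => sSup (S y)
  set J := Ioo (F x₀) (F b)
  have hbdd : ∀ y, BddAbove (S y) := fun y => bddAbove_Icc.mono fun x hx => hx.1
  have hS : ∀ y ∈ J, (S y).Nonempty := fun y hy => ⟨x₀, hx₀ab, hy.1.le⟩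
  have hψS : ∀ y ∈ J, ψ y ∈ S y := fun y hy =>
    (isCompact_Icc.of_isClosed_subset (isClosed_Icc.inter (isClosed_le hF continuous_const))
      fun x hx => hx.1).sSup_mem (hS y hy)
  have hle : ∀ x ∈ Icc a b, x ≤ ψ (F x) := fun x hx => le_csSup (hbdd _) ⟨hx, le_rfl⟩
  have hright : ∀ y ∈ J, ∀ x ∈ Ioc (ψ y) b, y < F x := fun y hy x hx =>
    not_le.1 fun hxy => hx.1.not_ge (le_csSup (hbdd y)
      ⟨⟨(hψS y hy).1.1.trans hx.1.le, hx.2⟩, hxy⟩)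
  have hFψ : ∀ y ∈ J, F (ψ y) = y := by
    intro y hy
    refine le_antisymm (hψS y hy).2 (not_lt.1 fun hlt => ?_)
    obtain ⟨z, hz, hFz⟩ := intermediate_value_Icc (hψS y hy).1.2 hF.continuousOn
      ⟨hlt.le, hy.2.le⟩
    have hzψ : ψ y < z := lt_of_le_of_ne hz.1 (by rintro rfl; exact hlt.ne hFz)
    exact (hright y hy z ⟨hzψ, hz.2⟩).ne hFz.symm
  have hmono : MonotoneOn ψ J := fun y hy y' hy' hyy' =>
    csSup_le_csSup (hbdd y') (hS y hy) fun x hx => ⟨hx.1, hx.2.trans hyy'⟩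
  have hinj : InjOn ψ J := fun y hy y' hy' h => by rw [← hFψ y hy, h, hFψ y' hy']
  have himage : volume (ψ '' J) = 0 := by
    refine measure_mono_null ?_ hnull
    rintro _ ⟨y, hy, rfl⟩
    exact ⟨(hψS y hy).1, fun x hx => (hFψ y hy).symm ▸ hright y hy x hx⟩
  obtain ⟨y, hy, hderiv⟩ := exists_hasDerivAt_zero_of_volume_image_eq_zero isOpen_Ioo
    (nonempty_Ioo.2 hx₀b) hmono hinj himage
  have htb : ψ y < b := lt_of_le_of_ne (hψS y hy).1.2 fun h => by
    have := hFψ y hy; rw [h] at this; exact hy.2.ne' this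
  refine ⟨ψ y, ⟨(hψS y hy).1.1, htb⟩, ?_⟩
  have hIoc : Ioc (ψ y) b ∈ 𝓝[>] ψ y := Ioc_mem_nhdsGT htb
  refine tendsto_slope_atTop_of_hasDerivWithinAt_zero ((hFψ y hy).symm ▸ hderiv.hasDerivWithinAt)
    (by rw [hFψ y hy]) (tendsto_nhdsWithin_iff.2 ⟨?_, ?_⟩) ?_
  · exact hF.continuousAt.tendsto.mono_left nhdsWithin_le_nhds
  · filter_upwards [hIoc] with x hx
    exact (hFψ y hy).symm ▸ hright y hy x hx
  · filter_upwards [hIoc] with x hx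
    exact hle x ⟨(hψS y hy).1.1.trans hx.1.le, hx.2⟩

noncomputable def realExtension (f : II → II) : ℝ → ℝ :=
  IccExtend zero_le_one fun x => (f x : ℝ)

theorem continuous_realExtension {f : II → II} (hf : Continuous f) :
    Continuous (realExtension f) :=
  (continuous_subtype_val.comp hf).Icc_extend'

theorem realExtension_coe (f : II → II) (x : II) : realExtension f x = f x :=
  IccExtend_val _ _ x

theorem diniQuotient_eq_slope (f : II → II) (t x : II) :
    ((f x : ℝ) - f t) / ((x : ℝ) - t) = slope (realExtension f) t x := by
  rw [slope_def_field, realExtension_coe, realExtension_coe]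

theorem zero_le_Drs_of_mem_rightRecordPoints {f : II → II} {t : II}
    (h : (t : ℝ) ∈ rightRecordPoints (realExtension f) 0 1) : 0 ≤ Drs f t := by
  refine le_liminf_of_le (h := eventually_mem_nhdsWithin.mono fun x (hx : (t : ℝ) < x) => ?_)
  rw [diniQuotient_eq_slope, slope_def_field, EReal.coe_nonneg]
  exact div_nonneg (sub_pos.2 (h.2 x ⟨hx, x.2.2⟩)).le (sub_pos.2 hx).le

theorem Drs_eq_top_and_DRs_eq_top_of_tendsto_slope {f : II → II} {t : II} (ht : (t : ℝ) < 1)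
    (h : Tendsto (slope (realExtension f) t) (𝓝[>] (t : ℝ)) atTop) :
    Drs f t = ⊤ ∧ DRs f t = ⊤ := by
  have : (𝓝[>] t).NeBot := nhdsGT_neBot_of_exists_gt ⟨1, ht⟩
  have hval : Tendsto (fun x : II => (x : ℝ)) (𝓝[>] t) (𝓝[>] (t : ℝ)) :=
    continuous_subtype_val.continuousWithinAt.tendsto_nhdsWithin fun _ hx => hx
  have hquot : Tendsto (fun x : II => ((((f x : ℝ) - f t) / ((x : ℝ) - t) : ℝ) : EReal))
      (𝓝[>] t) (𝓝 ⊤) := by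
    simp_rw [diniQuotient_eq_slope]
    exact EReal.tendsto_coe_atTop.comp (h.comp hval)
  exact ⟨hquot.liminf_eq, hquot.limsup_eq⟩

theorem diniQuotient_symm_comp (f : II → II) (t : II) :
    (fun x : II => (((((σ ∘ f) x : ℝ) - (σ ∘ f) t) / ((x : ℝ) - t) : ℝ) : EReal)) =
      -fun x : II => ((((f x : ℝ) - f t) / ((x : ℝ) - t) : ℝ) : EReal) := by
  ext x
  simp only [Function.comp_apply, coe_symm_eq, Pi.neg_apply, ← EReal.coe_neg]
  ring_nf

theorem Drs_symm_comp (f : II → II) (t : II) : Drs (σ ∘ f) t = -DRs f t := by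
  rw [Drs, DRs, diniQuotient_symm_comp, EReal.liminf_neg]

theorem DRs_symm_comp (f : II → II) (t : II) : DRs (σ ∘ f) t = -Drs f t := by
  rw [Drs, DRs, diniQuotient_symm_comp, EReal.limsup_neg]

theorem exists_Drs_eq_top_of_ae_Drs_eq_bot {f : II → II} (hf : Continuous f)
    (hx₀ : ∃ x₀, f x₀ < f 1) (hae : ∀ᵐ t, Drs f t = ⊥) :
    ∃ t : II, (t : ℝ) < 1 ∧ Drs f t = ⊤ ∧ DRs f t = ⊤ := by
  obtain ⟨x₀, hx₀⟩ := hx₀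
  have hnull : volume (rightRecordPoints (realExtension f) 0 1) = 0 := by
    have h0 : volume (Subtype.val '' {t : II | Drs f t ≠ ⊥}) = 0 := by
      rw [← (MeasurableEmbedding.subtype_coe measurableSet_Icc).comap_apply,
        ← Measure.Subtype.volume_def]
      exact ae_iff.1 hae
    refine measure_mono_null ?_ h0
    intro t ht
    exact ⟨⟨t, ht.1⟩, ne_bot_of_le_ne_bot EReal.zero_ne_bot
      (zero_le_Drs_of_mem_rightRecordPoints ht), rfl⟩
  have hx₀' : realExtension f x₀ < realExtension f 1 := by
    rw [← Icc.coe_one, realExtension_coe, realExtension_coe]; exact hx₀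
  obtain ⟨t, ⟨ht0, ht1⟩, hslope⟩ :=
    exists_tendsto_slope_atTop_of_volume_rightRecordPoints_eq_zero
      (continuous_realExtension hf) ⟨x₀, x₀.2, hx₀'⟩ hnull
  exact ⟨⟨t, ht0, ht1.le⟩, ht1, Drs_eq_top_and_DRs_eq_top_of_tendsto_slope ht1 hslope⟩

theorem not_besicovitch_of_ae {f : II → II} (hf : Continuous f) (hsurj : Function.Surjective f)
    (hae : ∀ᵐ t, DRs f t = ⊤ ∧ Drs f t = ⊥) : ¬ Besicovitch f := by
  rintro ⟨hright, -⟩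
  rcases (f 1).2.1.lt_or_eq with hpos | hzero
  · obtain ⟨x₀, hx₀⟩ := hsurj 0
    obtain ⟨t, ht, hDrs, hDRs⟩ :=
      exists_Drs_eq_top_of_ae_Drs_eq_bot hf ⟨x₀, hx₀ ▸ hpos⟩ (hae.mono fun _ h => h.2)
    exact hright t ht (hDRs.trans hDrs.symm)
  · obtain ⟨x₁, hx₁⟩ := hsurj 1
    have hlt : (σ ∘ f) x₁ < (σ ∘ f) 1 := by
      show (σ (f x₁) : ℝ) < σ (f 1)
      simp [coe_symm_eq, hx₁, ← hzero]
    obtain ⟨t, ht, hDrs, hDRs⟩ := exists_Drs_eq_top_of_ae_Drs_eq_bot (continuous_symm.comp hf)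
      ⟨x₁, hlt⟩ (hae.mono fun t h => by rw [Drs_symm_comp, h.1, EReal.neg_top])
    rw [Drs_symm_comp] at hDrs
    rw [DRs_symm_comp] at hDRs
    exact hright t ht (neg_inj.1 (hDrs.trans hDRs.symm))

/-- Given that the functions in `C(λ)` having a knot point at λ-a.e. point form a residual
set, the set of Besicovitch functions in `C(λ)` is meager. -/
theorem stmt13
    (hres : {g : Clam | ∀ᵐ x : II, DRs (⇑g.1) x = ⊤ ∧ DLs (⇑g.1) x = ⊤ ∧
        Drs (⇑g.1) x = ⊥ ∧ Dls (⇑g.1) x = ⊥} ∈ residual Clam) :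
    IsMeagre {g : Clam | Besicovitch (⇑g.1)} :=
  mem_of_superset hres fun g hg =>
    not_besicovitch_of_ae g.1.continuous g.2.1 (Eventually.mono hg fun _ h => ⟨h.1, h.2.2.1⟩)
end
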